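/- Let F(z) = 1/(1-z-z²) be the Fibonacci generating function and C the Catalan generating function. Then the pair (F, (zC)∘(F-1)) is a Riordan pseudo-involution; in particular (zC)∘(F-1) is pseudo-involutory and F∘(-(zC)∘(F-1)) = 1/F. -/

import Mathlib

/-!
Write `P t = t - t²` and `Q t = t + t²`, so that `F = 1 / (1 - Q z)`. Composition with a series
of zero constant term is a ring homomorphism, and `P` and `Q` are injective on series of zero
constant term. Since `zC - (zC)² = z`, the series `f = (zC)∘(F - 1)` satisfies `P f = F - 1`.
For `u = -f(-z)` this gives `Q u = 1 - 1 / (1 + P z)`, whence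
`P (f∘u) = 1 / (1 - Q u) - 1 = P z` and `Q (u∘f) = 1 - 1 / (1 + P f) = 1 - 1 / F = Q z`.
Finally `F∘(-f) = 1 / (1 + P f) = 1 / F`.
-/

open PowerSeries

/-- Composition `f ∘ g` of formal power series (meaningful when the constant
coefficient of `g` is zero). -/
noncomputable def comp (f g : PowerSeries ℚ) : PowerSeries ℚ :=
  PowerSeries.mk fun n =>
    ∑ i ∈ Finset.range (n + 1), (PowerSeries.coeff i f) * (PowerSeries.coeff n (g ^ i))

/-- A formal power series `f` is pseudo-involutory when its compositional
inverse is `-f(-z)`. -/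
def PseudoInvolutory (f : PowerSeries ℚ) : Prop :=
  comp f (-(comp f (-X))) = X ∧ comp (-(comp f (-X))) f = X

theorem coeff_pow_eq_zero_of_lt {R : Type*} [CommRing R] {g : R⟦X⟧} (hg : constantCoeff g = 0)
    {n i : ℕ} (h : n < i) : coeff n (g ^ i) = 0 :=
  coeff_of_lt_order _ <| (Nat.cast_lt.mpr h).trans_le (le_order_pow_of_constantCoeff_eq_zero i hg)

section comp

variable {g : ℚ⟦X⟧}

theorem comp_eq_substAlgHom (hg : constantCoeff g = 0) (f : ℚ⟦X⟧) :
    comp f g = substAlgHom (HasSubst.of_constantCoeff_zero' hg) f := by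
  ext n
  rw [coe_substAlgHom, coeff_subst' (HasSubst.of_constantCoeff_zero' hg), comp, coeff_mk,
    finsum_eq_sum_of_support_subset _ (s := Finset.range (n + 1))]
  · simp only [smul_eq_mul]
  · intro i hi
    rw [Function.mem_support] at hi
    rw [Finset.coe_range, Set.mem_Iio]
    by_contra! h
    exact hi (by rw [coeff_pow_eq_zero_of_lt hg (by omega), smul_zero])

theorem comp_add (hg : constantCoeff g = 0) (f h : ℚ⟦X⟧) :
    comp (f + h) g = comp f g + comp h g := by
  simp only [comp_eq_substAlgHom hg, map_add]

theorem comp_sub (hg : constantCoeff g = 0) (f h : ℚ⟦X⟧) :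
    comp (f - h) g = comp f g - comp h g := by
  simp only [comp_eq_substAlgHom hg, map_sub]

theorem comp_mul (hg : constantCoeff g = 0) (f h : ℚ⟦X⟧) :
    comp (f * h) g = comp f g * comp h g := by
  simp only [comp_eq_substAlgHom hg, map_mul]

theorem comp_pow (hg : constantCoeff g = 0) (f : ℚ⟦X⟧) (n : ℕ) :
    comp (f ^ n) g = comp f g ^ n := by
  simp only [comp_eq_substAlgHom hg, map_pow]

theorem comp_one (hg : constantCoeff g = 0) : comp 1 g = 1 := by
  simp only [comp_eq_substAlgHom hg, map_one]

theorem comp_X (hg : constantCoeff g = 0) : comp X g = g := by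
  rw [comp_eq_substAlgHom hg, substAlgHom_X]

theorem constantCoeff_comp (f g : ℚ⟦X⟧) : constantCoeff (comp f g) = constantCoeff f := by
  rw [← coeff_zero_eq_constantCoeff_apply, ← coeff_zero_eq_constantCoeff_apply, comp, coeff_mk]
  simp

theorem comp_inv (hg : constantCoeff g = 0) (f : ℚ⟦X⟧) : comp f⁻¹ g = (comp f g)⁻¹ := by
  by_cases hf : constantCoeff f = 0
  · rw [PowerSeries.inv_eq_zero.mpr hf, PowerSeries.inv_eq_zero.mpr (by rwa [constantCoeff_comp])]
    simp [comp_eq_substAlgHom hg]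
  · rw [eq_inv_iff_mul_eq_one (by rwa [constantCoeff_comp]), ← comp_mul hg,
      PowerSeries.inv_mul_cancel _ hf, comp_one hg]

end comp

theorem eq_of_sub_sq_eq_sub_sq {R : Type*} [CommRing R] {a b : R⟦X⟧}
    (ha : constantCoeff a = 0) (hb : constantCoeff b = 0) (h : a - a ^ 2 = b - b ^ 2) : a = b := by
  have hunit : IsUnit (1 - a - b) := isUnit_iff_constantCoeff.mpr (by simp [ha, hb])
  exact sub_eq_zero.mp <| hunit.mul_left_eq_zero.mp (by linear_combination h)

theorem eq_of_add_sq_eq_add_sq {R : Type*} [CommRing R] {a b : R⟦X⟧}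
    (ha : constantCoeff a = 0) (hb : constantCoeff b = 0) (h : a + a ^ 2 = b + b ^ 2) : a = b :=
  neg_inj.mp <| eq_of_sub_sq_eq_sub_sq (by simp [ha]) (by simp [hb]) (by linear_combination -h)

theorem inv_inv_of_constantCoeff_ne_zero {k : Type*} [Field k] {φ : k⟦X⟧}
    (h : constantCoeff φ ≠ 0) : φ⁻¹⁻¹ = φ :=
  (inv_eq_iff_mul_eq_one (by simpa using h)).mpr (PowerSeries.mul_inv_cancel φ h)

theorem comp_sub_sq_of_sub_sq_eq_X {b g : ℚ⟦X⟧} (hb : b - b ^ 2 = X)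
    (hg : constantCoeff g = 0) :
    comp b g - comp b g ^ 2 = g := by
  rw [← comp_pow hg, ← comp_sub hg, hb, comp_X hg]

theorem comp_inv_one_sub_X_sub_X_sq {v : ℚ⟦X⟧} (hv : constantCoeff v = 0) :
    comp (1 - X - X ^ 2)⁻¹ v = (1 - v - v ^ 2)⁻¹ := by
  rw [comp_inv hv, comp_sub hv, comp_sub hv, comp_one hv, comp_pow hv, comp_X hv]

theorem add_sq_neg_comp_neg_X {f : ℚ⟦X⟧} (hf : f - f ^ 2 = (1 - X - X ^ 2)⁻¹ - 1) :
    -comp f (-X) + (-comp f (-X)) ^ 2 = 1 - (1 + X - X ^ 2)⁻¹ := by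
  have hX : constantCoeff (-X : ℚ⟦X⟧) = 0 := by simp
  have h := congrArg (comp · (-X)) hf
  simp only [comp_sub hX, comp_pow hX, comp_inv_one_sub_X_sub_X_sq hX, comp_one hX] at h
  rw [show (1 - -X - (-X) ^ 2 : ℚ⟦X⟧) = 1 + X - X ^ 2 by ring] at h
  linear_combination -h

theorem pseudoInvolutory_of_sub_sq_eq {f : ℚ⟦X⟧} (hf0 : constantCoeff f = 0)
    (hf : f - f ^ 2 = (1 - X - X ^ 2)⁻¹ - 1) : PseudoInvolutory f := by
  set u := -comp f (-X) with hu_def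
  have hu0 : constantCoeff u = 0 := by simp [hu_def, constantCoeff_comp, hf0]
  have hu : u + u ^ 2 = 1 - (1 + X - X ^ 2)⁻¹ := add_sq_neg_comp_neg_X hf
  constructor
  · refine eq_of_sub_sq_eq_sub_sq (by rw [constantCoeff_comp, hf0]) constantCoeff_X ?_
    calc comp f u - comp f u ^ 2 = (1 - u - u ^ 2)⁻¹ - 1 := by
          rw [← comp_pow hu0, ← comp_sub hu0, hf, comp_sub hu0, comp_inv_one_sub_X_sub_X_sq hu0,
            comp_one hu0]
      _ = (1 + X - X ^ 2)⁻¹⁻¹ - 1 := by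
          rw [show 1 - u - u ^ 2 = 1 - (u + u ^ 2) by ring, hu, sub_sub_cancel]
      _ = X - X ^ 2 := by rw [inv_inv_of_constantCoeff_ne_zero (by simp)]; ring
  · refine eq_of_add_sq_eq_add_sq (by rw [constantCoeff_comp, hu0]) constantCoeff_X ?_
    calc comp u f + comp u f ^ 2 = 1 - (1 + f - f ^ 2)⁻¹ := by
          rw [← comp_pow hf0, ← comp_add hf0, hu, comp_sub hf0, comp_inv hf0, comp_sub hf0,
            comp_add hf0, comp_one hf0, comp_pow hf0, comp_X hf0]
      _ = 1 - (1 - X - X ^ 2)⁻¹⁻¹ := by rw [add_sub_assoc, hf, add_sub_cancel]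
      _ = X + X ^ 2 := by rw [inv_inv_of_constantCoeff_ne_zero (by simp)]; ring

theorem comp_inv_neg_of_sub_sq_eq {f : ℚ⟦X⟧} (hf0 : constantCoeff f = 0)
    (hf : f - f ^ 2 = (1 - X - X ^ 2)⁻¹ - 1) :
    comp (1 - X - X ^ 2)⁻¹ (-f) = (1 - X - X ^ 2 : ℚ⟦X⟧)⁻¹⁻¹ := by
  have hf0' : constantCoeff (-f) = 0 := by simp [hf0]
  rw [comp_inv_one_sub_X_sub_X_sq hf0', show 1 - -f - (-f) ^ 2 = 1 + (f - f ^ 2) by ring, hf,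
    add_sub_cancel]

/-- For the Fibonacci generating function `F = 1/(1-z-z²)` and the Catalan
series `C = 1 + zC²`, the pair `(F, (zC)∘(F-1))` is a Riordan
pseudo-involution: `(zC)∘(F-1)` is pseudo-involutory and
`F∘(-(zC)∘(F-1)) = 1/F`. -/
theorem fibonacci_pseudo_involution (Cat : PowerSeries ℚ)
    (hCat : Cat = 1 + X * Cat ^ 2) :
    PseudoInvolutory (comp (X * Cat) ((1 - X - X ^ 2 : PowerSeries ℚ)⁻¹ - 1)) ∧
      comp ((1 - X - X ^ 2 : PowerSeries ℚ)⁻¹)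
          (-(comp (X * Cat) ((1 - X - X ^ 2 : PowerSeries ℚ)⁻¹ - 1))) =
        ((1 - X - X ^ 2 : PowerSeries ℚ)⁻¹)⁻¹ := by
  have hG0 : constantCoeff ((1 - X - X ^ 2 : ℚ⟦X⟧)⁻¹ - 1) = 0 := by simp
  have hXCat : X * Cat - (X * Cat) ^ 2 = X := by
    nth_rewrite 1 [hCat]; ring
  have hf0 : constantCoeff (comp (X * Cat) ((1 - X - X ^ 2 : ℚ⟦X⟧)⁻¹ - 1)) = 0 := by
    simp [constantCoeff_comp]
  have hf := comp_sub_sq_of_sub_sq_eq_X hXCat hG0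
  exact ⟨pseudoInvolutory_of_sub_sq_eq hf0 hf, comp_inv_neg_of_sub_sq_eq hf0 hf⟩
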